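/- Let L ⊆ S¹ be a closed arc of length strictly less than π. Suppose θ, θ' ∈ [0, 2π] are such that e^{iθ} ∈ L and e^{iθ'} ∈ L with θ' = 2π or θ' = 0 corresponding to an endpoint configuration where the firing oscillator has phase 0 (mod 2π) in L. If Ψ satisfies Ψ(φ) ∈ (0, φ) for φ ∈ (0, π) and Ψ(φ) ∈ (φ, 2π) for φ ∈ (π, 2π), Ψ(0)=0, Ψ(2π)=2π, and the point 1 = e^{i·0} lies in L, then e^{iΨ(θ)} ∈ L for every θ with e^{iθ} ∈ L. -/

import Mathlib

open Real Set

/-!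
Lift the arc `L` to an interval `[a, b]` of length `< π` of the real line. It contains the lift
`θ` of the jumping phase and a lift `2πm` of the point `1`; as these lie less than `π` apart,
`2πm` is `0` when `θ < π` and `2π` when `θ > π` (and `θ = π` cannot occur). Assumption 1 puts
`Ψ θ` between `θ` and that lift of `1`, hence in `[a, b]`.
-/

lemma Complex.exp_I_mul_eq_exp_I_mul_iff {x y : ℝ} :
    Complex.exp (Complex.I * x) = Complex.exp (Complex.I * y) ↔
      ∃ m : ℤ, x = y + m * (2 * π) := by
  rw [mul_comm, mul_comm Complex.I, ← Circle.coe_exp, ← Circle.coe_exp, Circle.coe_inj,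
    Circle.exp_eq_exp]

lemma Int.eq_of_abs_sub_mul_lt {c x : ℝ} {m j : ℤ} (hm : |x - m * c| < c / 2)
    (hj : |x - j * c| ≤ c / 2) : m = j := by
  have hc : 0 < c := by linarith [abs_nonneg (x - m * c), abs_nonneg (x - j * c)]
  have hmj : |((m - j : ℤ) : ℝ)| * c < 1 * c :=
    calc |((m - j : ℤ) : ℝ)| * c = |(x - j * c) - (x - m * c)| := by
          rw [← abs_of_pos hc, ← abs_mul, abs_of_pos hc]; congr 1; push_cast; ring
      _ ≤ |x - j * c| + |x - m * c| := abs_sub _ _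
      _ < 1 * c := by linarith
  have := (mul_lt_mul_iff_of_pos_right hc).mp hmj
  rw [← Int.cast_abs, ← Int.cast_one, Int.cast_lt, Int.abs_lt_one_iff] at this
  omega

lemma apply_mem_uIcc_of_abs_sub_lt_pi {Ψ : ℝ → ℝ} (h0 : Ψ 0 = 0) (h2π : Ψ (2 * π) = 2 * π)
    (hlow : ∀ φ ∈ Set.Ioo 0 π, Ψ φ ∈ Set.Ioo 0 φ)
    (hhigh : ∀ φ ∈ Set.Ioo π (2 * π), Ψ φ ∈ Set.Ioo φ (2 * π))
    {θ : ℝ} (hθ : θ ∈ Icc 0 (2 * π)) {m : ℤ} (hm : |θ - m * (2 * π)| < π) :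
    Ψ θ ∈ uIcc θ (m * (2 * π)) := by
  have hm' : |θ - m * (2 * π)| < 2 * π / 2 := by rwa [mul_div_cancel_left₀ _ two_ne_zero]
  rcases hθ.1.eq_or_lt with rfl | hθ0
  · simp [h0]
  rcases hθ.2.eq_or_lt with rfl | hθ2π
  · simp [h2π]
  rcases lt_trichotomy θ π with hθπ | rfl | hθπ
  · obtain rfl : m = 0 := Int.eq_of_abs_sub_mul_lt hm' <| by
      rw [abs_le]; constructor <;> push_cast <;> linarith
    simpa [uIcc_of_ge hθ0.le] using Ioo_subset_Icc_self (hlow θ ⟨hθ0, hθπ⟩)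
  · obtain rfl : m = 0 := Int.eq_of_abs_sub_mul_lt hm' <| by
      rw [abs_le]; constructor <;> push_cast <;> linarith
    simp [abs_of_pos pi_pos] at hm
  · obtain rfl : m = 1 := Int.eq_of_abs_sub_mul_lt hm' <| by
      rw [abs_le]; constructor <;> push_cast <;> linarith
    simpa [uIcc_of_le hθ2π.le] using Ioo_subset_Icc_self (hhigh θ ⟨hθπ, hθ2π⟩)

theorem arc_invariance_general (α d : ℝ) (hdπ : d < π)
    (L : Set ℂ)
    (hL : L = {z : ℂ | ∃ φ ∈ Set.Icc α (α + d), z = Complex.exp (Complex.I * (φ : ℂ))})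
    (h1L : (1 : ℂ) ∈ L)
    (Ψ : ℝ → ℝ) (h0 : Ψ 0 = 0) (h2π : Ψ (2 * π) = 2 * π)
    (hlow : ∀ φ ∈ Set.Ioo 0 π, Ψ φ ∈ Set.Ioo 0 φ)
    (hhigh : ∀ φ ∈ Set.Ioo π (2 * π), Ψ φ ∈ Set.Ioo φ (2 * π)) :
    ∀ θ ∈ Set.Icc 0 (2 * π), Complex.exp (Complex.I * (θ : ℂ)) ∈ L →
      Complex.exp (Complex.I * (Ψ θ : ℂ)) ∈ L := by
  subst hL
  rintro θ hθ ⟨φ, hφ, hθφ⟩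
  obtain ⟨φ₀, hφ₀, h1φ₀⟩ := h1L
  obtain ⟨n, rfl⟩ := Complex.exp_I_mul_eq_exp_I_mul_iff.mp hθφ
  obtain ⟨k, hk⟩ :=
    (Complex.exp_I_mul_eq_exp_I_mul_iff (x := 0) (y := φ₀)).mp (by simpa using h1φ₀)
  set A := Icc (α + n * (2 * π)) (α + d + n * (2 * π))
  have hθA : φ + n * (2 * π) ∈ A := ⟨by linarith [hφ.1], by linarith [hφ.2]⟩
  have hkA : ((n - k : ℤ) : ℝ) * (2 * π) ∈ A := by
    push_cast; exact ⟨by linarith [hφ₀.1], by linarith [hφ₀.2]⟩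
  have hΨA : Ψ (φ + n * (2 * π)) ∈ A := ordConnected_Icc.uIcc_subset hθA hkA <|
    apply_mem_uIcc_of_abs_sub_lt_pi h0 h2π hlow hhigh hθ <|
      (dist_le_of_mem_Icc hθA hkA).trans_lt (by linarith)
  refine ⟨Ψ (φ + n * (2 * π)) - n * (2 * π), sub_mem_Icc_iff_left.mpr hΨA, ?_⟩
  exact Complex.exp_I_mul_eq_exp_I_mul_iff.mpr ⟨n, by ring⟩

/-- Let `L` be a closed arc of the unit circle of length `d < π` containing
the point `1 = e^{i·0}` (the position of the firing oscillator, whose phase is `0 mod 2π`).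
If `Ψ` satisfies Assumption 1, then the jump `θ ↦ Ψ(θ)` maps every phase whose circle point
lies in `L` to a phase whose circle point again lies in `L`. -/
theorem arc_invariance (α d : ℝ) (hd0 : 0 ≤ d) (hdπ : d < π)
    (L : Set ℂ)
    (hL : L = {z : ℂ | ∃ φ ∈ Set.Icc α (α + d), z = Complex.exp (Complex.I * (φ : ℂ))})
    (h1L : (1 : ℂ) ∈ L)
    (Ψ : ℝ → ℝ) (h0 : Ψ 0 = 0) (h2π : Ψ (2 * π) = 2 * π)
    (hlow : ∀ φ ∈ Set.Ioo 0 π, Ψ φ ∈ Set.Ioo 0 φ)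
    (hhigh : ∀ φ ∈ Set.Ioo π (2 * π), Ψ φ ∈ Set.Ioo φ (2 * π)) :
    ∀ θ ∈ Set.Icc 0 (2 * π), Complex.exp (Complex.I * (θ : ℂ)) ∈ L →
      Complex.exp (Complex.I * (Ψ θ : ℂ)) ∈ L :=
  arc_invariance_general α d hdπ L hL h1L Ψ h0 h2π hlow hhigh
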